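/- arXiv:2407.01383 — 2 statements merged into one kernel-verified Lean document; each statement's English description precedes it below -/
import Mathlib

section
/- Let (N,x) be the apex game with apex player a, |N| ≥ 3, and let S ⊆ N with 2 ≤ |S| ≤ |N|−1. Let p_S, q_S be probability distributions over Π₂(S) and over the subsets of N\S such that: if a ∉ S then q_S(N\({a}∪S)) = q_S({a}), and if a ∈ S then q_S(N\S) = q_S(∅). Then C^x_{p,q}(S) = 0. -/
open Finset

variable {α : Type*} [DecidableEq α]

/-- A simple monotone game on the player set `N`: `v` maps coalitions to `{0,1}`,
`v ∅ = 0`, `v N = 1`, and `v` is monotone on subsets of `N`. -/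
structure SimpleGame (N : Finset α) (v : Finset α → ℝ) : Prop where
  empty : v ∅ = 0
  full : v N = 1
  mono : ∀ ⦃S T : Finset α⦄, S ⊆ T → T ⊆ N → v S ≤ v T
  binary : ∀ S ⊆ N, v S = 0 ∨ v S = 1

/-- Block interaction indicator `BI v {S₁,S₂} T = v(S₁∪S₂∪T) − v(S₁∪T) − v(S₂∪T) + v(T)`. -/
noncomputable def BI (v : Finset α → ℝ) (π : Sym2 (Finset α)) (T : Finset α) : ℝ :=
  Sym2.lift ⟨fun A B => v (A ∪ B ∪ T) - v (A ∪ T) - v (B ∪ T) + v T,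
    fun A B => by simp only []; rw [Finset.union_comm A B]; ring⟩ π

/-- `Π₂(S)`: the set of unordered partitions of `S` into two nonempty parts. -/
def Pi2 (S : Finset α) : Finset (Sym2 (Finset α)) :=
  (S.powerset.filter fun Q => Q ≠ ∅ ∧ Q ≠ S).image fun Q => s(Q, S \ Q)

/-- `S` is critical with respect to `T`: `v(S∪T) − v(T) = 1`. -/
def Critical (v : Finset α → ℝ) (S T : Finset α) : Prop := v (S ∪ T) - v T = 1

/-- `S` is essential critical with respect to `T`: `S` is critical wrt `T` and no
proper nonempty subset of `S` is critical wrt `T`. -/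
def EssentialCritical (v : Finset α → ℝ) (S T : Finset α) : Prop :=
  Critical v S T ∧ ∀ S' : Finset α, S' ⊂ S → S'.Nonempty → ¬ Critical v S' T

/-- The attitude `A_p(S,T)` of `S` towards `T` under the distribution `p` on `Π₂(S)`. -/
noncomputable def attitude (v : Finset α → ℝ) (p : Sym2 (Finset α) → ℝ)
    (S T : Finset α) : ℝ :=
  ∑ π ∈ Pi2 S, p π * BI v π T

/-- The coopetition index `C_{p,q}(S)`. -/
noncomputable def coop (N : Finset α) (v : Finset α → ℝ)
    (p : Sym2 (Finset α) → ℝ) (q : Finset α → ℝ) (S : Finset α) : ℝ :=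
  ∑ T ∈ (N \ S).powerset, q T * attitude v p S T

/-- `Σ_S(N)`: orderings of `N` (as lists) in which the elements of `S` occupy
consecutive positions. -/
noncomputable def SigmaOrd (N S : Finset α) : Finset (List α) := by
  classical
  exact N.toList.permutations.toFinset.filter
    fun l => ∃ k ∈ Finset.range (l.length + 1), ((l.drop k).take S.card).toFinset = S

/-- Sequential attitude `AS(S,σ)` of `S` towards the ordering `l`:
the average over `k = 1, …, s−1` of the block interaction between the first `k` and the
last `s−k` elements of the block of `S` in `l`, against the predecessors of `S` in `l`. -/
noncomputable def seqAttitude (v : Finset α → ℝ) (S : Finset α) (l : List α) : ℝ :=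
  (1 / ((S.card : ℝ) - 1)) * ∑ k ∈ Finset.Icc 1 (S.card - 1),
    BI v (s((((l.dropWhile fun x => decide (x ∉ S)).take S.card).take k).toFinset,
            (((l.dropWhile fun x => decide (x ∉ S)).take S.card).drop k).toFinset))
      (l.takeWhile fun x => decide (x ∉ S)).toFinset

/-- Shapley-Owen coopetition index defined through orderings. -/
noncomputable def C_SO_ord (N : Finset α) (v : Finset α → ℝ) (S : Finset α) : ℝ :=
  (1 / ((SigmaOrd N S).card : ℝ)) * ∑ l ∈ SigmaOrd N S, seqAttitude v S l

/-- Shapley-Owen weight on partitions `{Q, S\Q}`: `2·q!·(s−q)!/((s−1)·s!)`. -/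
noncomputable def soWeight (S : Finset α) : Sym2 (Finset α) → ℝ :=
  Sym2.lift ⟨fun A B => (2 * A.card.factorial * B.card.factorial : ℝ) /
      (((S.card : ℝ) - 1) * (S.card.factorial : ℝ)),
    fun A B => by simp only []; ring⟩

/-- Shapley-Owen weight on external coalitions: `t!·(n−s−t)!/(n−s+1)!`. -/
noncomputable def soExt (N S T : Finset α) : ℝ :=
  (T.card.factorial * (N.card - S.card - T.card).factorial : ℝ) /
    ((N.card - S.card + 1).factorial : ℝ)

/-- Shapley-Owen coopetition index (closed formula). -/
noncomputable def C_SO (N : Finset α) (v : Finset α → ℝ) (S : Finset α) : ℝ :=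
  ∑ T ∈ (N \ S).powerset, soExt N S T * ∑ π ∈ Pi2 S, soWeight S π * BI v π T

/-- Banzhaf coopetition index. -/
noncomputable def C_Bz (N : Finset α) (v : Finset α → ℝ) (S : Finset α) : ℝ :=
  (1 / ((2 : ℝ) ^ (N.card - S.card) * ((2 : ℝ) ^ (S.card - 1) - 1))) *
    ∑ T ∈ (N \ S).powerset, ∑ π ∈ Pi2 S, BI v π T

/-- Decisiveness index `D_{p,q}(S)`. -/
noncomputable def decis (N : Finset α) (v : Finset α → ℝ)
    (p : Sym2 (Finset α) → ℝ) (q : Finset α → ℝ) (S : Finset α) : ℝ :=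
  ∑ T ∈ (N \ S).powerset, q T * ∑ π ∈ Pi2 S, p π * |BI v π T|

/-- Banzhaf decisiveness index. -/
noncomputable def D_Bz (N : Finset α) (v : Finset α → ℝ) (S : Finset α) : ℝ :=
  (1 / ((2 : ℝ) ^ (N.card - S.card) * ((2 : ℝ) ^ (S.card - 1) - 1))) *
    ∑ T ∈ (N \ S).powerset, ∑ π ∈ Pi2 S, |BI v π T|

/-- Shapley-Owen decisiveness index. -/
noncomputable def D_SO (N : Finset α) (v : Finset α → ℝ) (S : Finset α) : ℝ :=
  ∑ T ∈ (N \ S).powerset, soExt N S T * ∑ π ∈ Pi2 S, soWeight S π * |BI v π T|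

/-- The apex game on `N` with apex player `a`. -/
noncomputable def apexGame (N : Finset α) (a : α) : Finset α → ℝ :=
  fun S => if (a ∈ S ∧ (S \ {a}).Nonempty) ∨ S = N \ {a} then 1 else 0

private lemma apex_one_of {N : Finset α} {a : α} {X : Finset α}
    (h : a ∈ X) (c : α) (hc : c ∈ X) (hca : c ≠ a) : apexGame N a X = 1 := by
  unfold apexGame
  rw [if_pos (Or.inl ⟨h, ⟨c, Finset.mem_sdiff.mpr ⟨hc, by simp [hca]⟩⟩⟩)]

private lemma apex_one_top {N : Finset α} {a : α} {X : Finset α}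
    (h : X = N \ {a}) : apexGame N a X = 1 := by
  unfold apexGame; rw [if_pos (Or.inr h)]

private lemma apex_zero_not {N : Finset α} {a : α} {X : Finset α}
    (h1 : a ∉ X) (h2 : X ≠ N \ {a}) : apexGame N a X = 0 := by
  unfold apexGame; rw [if_neg]
  rintro (⟨h, -⟩ | h)
  · exact h1 h
  · exact h2 h

private lemma apex_zero_singleton {N : Finset α} {a : α} {X : Finset α}
    (h : X = {a}) : apexGame N a X = 0 := by
  subst h; unfold apexGame; rw [if_neg]
  rintro (⟨-, h2⟩ | h)
  · simp at h2
  · have : a ∈ N \ {a} := h ▸ Finset.mem_singleton_self a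
    simp at this

private lemma apex_key (N : Finset α) (a : α) (ha : a ∈ N)
    (S : Finset α) (hS : S ⊆ N) (hs : 2 ≤ S.card) (hs' : S.card ≤ N.card - 1)
    (q : Finset α → ℝ)
    (hbal₁ : a ∉ S → q (N \ ({a} ∪ S)) = q {a})
    (hbal₂ : a ∈ S → q (N \ S) = q ∅)
    (A B : Finset α) (hA : A.Nonempty) (hB : B.Nonempty)
    (hd : Disjoint A B) (hun : A ∪ B = S) (hc : a ∈ S → a ∈ A) :
    ∑ T ∈ (N \ S).powerset, q T *
      (apexGame N a (S ∪ T) - apexGame N a (A ∪ T) - apexGame N a (B ∪ T)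
        + apexGame N a T) = 0 := by
  have hAS : A ⊆ S := hun ▸ Finset.subset_union_left
  have hBS : B ⊆ S := hun ▸ Finset.subset_union_right
  -- an element of S different from a
  have hbx : ∃ b ∈ S, b ≠ a := by
    by_contra h
    push_neg at h
    have : S ⊆ {a} := fun x hx => Finset.mem_singleton.mpr (h x hx)
    have := Finset.card_le_card this
    simp at this
    omega
  obtain ⟨b, hbS, hba⟩ := hbx
  have hNSne : (N \ S).Nonempty := by
    rw [Finset.sdiff_nonempty]
    intro h
    have h1 := Finset.card_le_card h
    have h2 : 1 ≤ N.card := Finset.card_pos.mpr ⟨a, ha⟩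
    omega
  by_cases haS : a ∈ S
  · -- apex player inside S, hence a ∈ A
    have haA : a ∈ A := hc haS
    have haB : a ∉ B := Finset.disjoint_left.mp hd haA
    have hTfact : ∀ T : Finset α, T ⊆ N \ S → a ∉ T := by
      intro T hT h
      exact (Finset.mem_sdiff.mp (hT h)).2 haS
    have hTtop : ∀ T : Finset α, T ⊆ N \ S → T ≠ N \ {a} := by
      intro T hT h
      have hbT : b ∈ T := h ▸ Finset.mem_sdiff.mpr ⟨hS hbS, by simp [hba]⟩
      exact (Finset.mem_sdiff.mp (hT hbT)).2 hbS
    by_cases hAa : A = {a}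
    · -- the critical case A = {a}
      have hBeq : B = S \ {a} := by
        rw [← hun, hAa, Finset.union_sdiff_cancel_left (hAa ▸ hd)]
      have step : ∀ T ∈ (N \ S).powerset, q T *
          (apexGame N a (S ∪ T) - apexGame N a (A ∪ T) - apexGame N a (B ∪ T)
            + apexGame N a T) =
          (if T = ∅ then q T else 0) - (if T = N \ S then q T else 0) := by
        intro T hT
        rw [Finset.mem_powerset] at hT
        have haT : a ∉ T := hTfact T hT
        have v1 : apexGame N a (S ∪ T) = 1 :=
          apex_one_of (Finset.mem_union_left _ haS) b (Finset.mem_union_left _ hbS) hba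
        have v4 : apexGame N a T = 0 := apex_zero_not haT (hTtop T hT)
        have v2 : apexGame N a (A ∪ T) = if T = ∅ then (0:ℝ) else 1 := by
          subst hAa
          by_cases hT0 : T = ∅
          · rw [if_pos hT0]
            exact apex_zero_singleton (by rw [hT0, Finset.union_empty])
          · rw [if_neg hT0]
            obtain ⟨c, hcT⟩ := Finset.nonempty_iff_ne_empty.mpr hT0
            exact apex_one_of (Finset.mem_union_left _ (Finset.mem_singleton_self a))
              c (Finset.mem_union_right _ hcT) (fun h => haT (h ▸ hcT))
        have v3 : apexGame N a (B ∪ T) = if T = N \ S then (1:ℝ) else 0 := by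
          rw [hBeq]
          by_cases hTN : T = N \ S
          · rw [if_pos hTN, hTN]
            apply apex_one_top
            ext x
            simp only [Finset.mem_union, Finset.mem_sdiff, Finset.mem_singleton]
            have h1 : x ∈ S → x ∈ N := @hS x
            by_cases hxS : x ∈ S <;> by_cases hxa : x = a <;> simp_all
          · rw [if_neg hTN]
            apply apex_zero_not
            · simp [haT]
            · intro h
              apply hTN
              apply Finset.Subset.antisymm hT
              intro x hx
              obtain ⟨hxN, hxS⟩ := Finset.mem_sdiff.mp hx
              have hxa : x ≠ a := fun h' => hxS (h' ▸ haS)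
              have : x ∈ (S \ {a}) ∪ T := by
                rw [h]
                exact Finset.mem_sdiff.mpr ⟨hxN, by simp [hxa]⟩
              rcases Finset.mem_union.mp this with h' | h'
              · exact absurd (Finset.mem_sdiff.mp h').1 hxS
              · exact h'
        rw [v1, v2, v3, v4]
        split_ifs with h1 h2
        · rw [h1] at h2
          exact absurd h2.symm hNSne.ne_empty
        · ring
        · ring
        · ring
      rw [Finset.sum_congr rfl step, Finset.sum_sub_distrib,
        Finset.sum_ite_eq' _ (∅ : Finset α) q, Finset.sum_ite_eq' _ (N \ S) q,
        if_pos (Finset.empty_mem_powerset _), if_pos (Finset.mem_powerset_self _),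
        hbal₂ haS, sub_self]
    · -- A strictly bigger than {a}
      obtain ⟨c, hcA, hca⟩ : ∃ c ∈ A, c ≠ a := by
        by_contra h
        push_neg at h
        exact hAa (Finset.Subset.antisymm
          (fun x hx => Finset.mem_singleton.mpr (h x hx))
          (Finset.singleton_subset_iff.mpr haA))
      apply Finset.sum_eq_zero
      intro T hT
      rw [Finset.mem_powerset] at hT
      have haT : a ∉ T := hTfact T hT
      have v1 : apexGame N a (S ∪ T) = 1 :=
        apex_one_of (Finset.mem_union_left _ haS) b (Finset.mem_union_left _ hbS) hba
      have v2 : apexGame N a (A ∪ T) = 1 :=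
        apex_one_of (Finset.mem_union_left _ haA) c (Finset.mem_union_left _ hcA) hca
      have v3 : apexGame N a (B ∪ T) = 0 := by
        apply apex_zero_not
        · simp [haB, haT]
        · intro h
          have hc' : c ∈ B ∪ T := h ▸ Finset.mem_sdiff.mpr ⟨hS (hAS hcA), by simp [hca]⟩
          rcases Finset.mem_union.mp hc' with h' | h'
          · exact Finset.disjoint_left.mp hd hcA h'
          · exact (Finset.mem_sdiff.mp (hT h')).2 (hAS hcA)
      have v4 : apexGame N a T = 0 := apex_zero_not haT (hTtop T hT)
      rw [v1, v2, v3, v4]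
      ring
  · -- apex player outside S
    have haA : a ∉ A := fun h => haS (hAS h)
    have haB : a ∉ B := fun h => haS (hBS h)
    obtain ⟨bA, hbA⟩ := hA
    obtain ⟨bB, hbB⟩ := hB
    have hbAa : bA ≠ a := fun h => haA (h ▸ hbA)
    have hbBa : bB ≠ a := fun h => haB (h ▸ hbB)
    have hT₀sub : N \ ({a} ∪ S) ⊆ N \ S :=
      Finset.sdiff_subset_sdiff (Finset.Subset.refl _) Finset.subset_union_right
    have step : ∀ T ∈ (N \ S).powerset, q T *
        (apexGame N a (S ∪ T) - apexGame N a (A ∪ T) - apexGame N a (B ∪ T)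
          + apexGame N a T) =
        (if T = N \ ({a} ∪ S) then q T else 0) - (if T = {a} then q T else 0) := by
      intro T hT
      rw [Finset.mem_powerset] at hT
      by_cases haT : a ∈ T
      · have hTT₀ : T ≠ N \ ({a} ∪ S) := by
          intro h
          rw [h] at haT
          simp at haT
        have v1 : apexGame N a (S ∪ T) = 1 :=
          apex_one_of (Finset.mem_union_right _ haT) bA
            (Finset.mem_union_left _ (hAS hbA)) hbAa
        have v2 : apexGame N a (A ∪ T) = 1 :=
          apex_one_of (Finset.mem_union_right _ haT) bA (Finset.mem_union_left _ hbA) hbAa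
        have v3 : apexGame N a (B ∪ T) = 1 :=
          apex_one_of (Finset.mem_union_right _ haT) bB (Finset.mem_union_left _ hbB) hbBa
        have v4 : apexGame N a T = if T = {a} then (0:ℝ) else 1 := by
          by_cases hTa : T = {a}
          · rw [if_pos hTa]
            exact apex_zero_singleton hTa
          · rw [if_neg hTa]
            obtain ⟨c, hcT, hca⟩ : ∃ c ∈ T, c ≠ a := by
              by_contra h
              push_neg at h
              exact hTa (Finset.Subset.antisymm
                (fun x hx => Finset.mem_singleton.mpr (h x hx))
                (Finset.singleton_subset_iff.mpr haT))
            exact apex_one_of haT c hcT hca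
        rw [v1, v2, v3, v4, if_neg hTT₀]
        split_ifs <;> ring
      · have hTa : T ≠ {a} := fun h => haT (h ▸ Finset.mem_singleton_self a)
        have v1 : apexGame N a (S ∪ T) =
            if T = N \ ({a} ∪ S) then (1:ℝ) else 0 := by
          by_cases hTT₀ : T = N \ ({a} ∪ S)
          · rw [if_pos hTT₀, hTT₀]
            apply apex_one_top
            ext x
            simp only [Finset.mem_union, Finset.mem_sdiff, Finset.mem_singleton]
            have h1 : x ∈ S → x ∈ N := @hS x
            by_cases hxS : x ∈ S <;> by_cases hxa : x = a <;> simp_all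
          · rw [if_neg hTT₀]
            apply apex_zero_not
            · simp [haS, haT]
            · intro h
              apply hTT₀
              apply Finset.Subset.antisymm
              · intro x hx
                obtain ⟨hxN, hxS⟩ := Finset.mem_sdiff.mp (hT hx)
                have hxa : x ≠ a := fun h' => haT (h' ▸ hx)
                simp [hxN, hxS, hxa]
              · intro x hx
                rw [Finset.mem_sdiff, Finset.mem_union, Finset.mem_singleton] at hx
                obtain ⟨hxN, hx2⟩ := hx
                push_neg at hx2
                have : x ∈ S ∪ T := by
                  rw [h]
                  exact Finset.mem_sdiff.mpr ⟨hxN, by simp [hx2.1]⟩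
                rcases Finset.mem_union.mp this with h' | h'
                · exact absurd h' hx2.2
                · exact h'
        have v2 : apexGame N a (A ∪ T) = 0 := by
          apply apex_zero_not
          · simp [haA, haT]
          · intro h
            have hb' : bB ∈ A ∪ T := h ▸ Finset.mem_sdiff.mpr ⟨hS (hBS hbB), by simp [hbBa]⟩
            rcases Finset.mem_union.mp hb' with h' | h'
            · exact Finset.disjoint_left.mp hd h' hbB
            · exact (Finset.mem_sdiff.mp (hT h')).2 (hBS hbB)
        have v3 : apexGame N a (B ∪ T) = 0 := by
          apply apex_zero_not
          · simp [haB, haT]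
          · intro h
            have hb' : bA ∈ B ∪ T := h ▸ Finset.mem_sdiff.mpr ⟨hS (hAS hbA), by simp [hbAa]⟩
            rcases Finset.mem_union.mp hb' with h' | h'
            · exact Finset.disjoint_left.mp hd hbA h'
            · exact (Finset.mem_sdiff.mp (hT h')).2 (hAS hbA)
        have v4 : apexGame N a T = 0 := by
          apply apex_zero_not haT
          intro h
          have hb' : bA ∈ T := h ▸ Finset.mem_sdiff.mpr ⟨hS (hAS hbA), by simp [hbAa]⟩
          exact (Finset.mem_sdiff.mp (hT hb')).2 (hAS hbA)
        rw [v1, v2, v3, v4, if_neg hTa]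
        split_ifs <;> ring
    rw [Finset.sum_congr rfl step, Finset.sum_sub_distrib,
      Finset.sum_ite_eq' _ (N \ ({a} ∪ S)) q, Finset.sum_ite_eq' _ ({a} : Finset α) q,
      if_pos (Finset.mem_powerset.mpr hT₀sub),
      if_pos (Finset.mem_powerset.mpr
        (Finset.singleton_subset_iff.mpr (Finset.mem_sdiff.mpr ⟨ha, haS⟩))),
      hbal₁ haS, sub_self]

/-- in the apex game, under the stated balance conditions on `q`, the
coopetition index of any `S` with `2 ≤ |S| ≤ |N| − 1` vanishes. -/
theorem statement14 (N : Finset α) (a : α) (ha : a ∈ N) (hn : 3 ≤ N.card)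
    (S : Finset α) (hS : S ⊆ N) (hs : 2 ≤ S.card) (hs' : S.card ≤ N.card - 1)
    (p : Sym2 (Finset α) → ℝ) (q : Finset α → ℝ)
    (hp0 : ∀ π ∈ Pi2 S, 0 ≤ p π) (hp1 : ∑ π ∈ Pi2 S, p π = 1)
    (hq0 : ∀ T ∈ (N \ S).powerset, 0 ≤ q T) (hq1 : ∑ T ∈ (N \ S).powerset, q T = 1)
    (hbal₁ : a ∉ S → q (N \ ({a} ∪ S)) = q {a})
    (hbal₂ : a ∈ S → q (N \ S) = q ∅) :
    coop N (apexGame N a) p q S = 0 := by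
  have key := apex_key N a ha S hS hs hs' q hbal₁ hbal₂
  have main : ∀ π ∈ Pi2 S,
      ∑ T ∈ (N \ S).powerset, q T * BI (apexGame N a) π T = 0 := by
    intro π hπ
    simp only [Pi2, Finset.mem_image, Finset.mem_filter, Finset.mem_powerset] at hπ
    obtain ⟨Q, ⟨hQS, hQ0, hQS'⟩, rfl⟩ := hπ
    have hBI : ∀ T, BI (apexGame N a) s(Q, S \ Q) T =
        apexGame N a (S ∪ T) - apexGame N a (Q ∪ T) - apexGame N a ((S \ Q) ∪ T)
          + apexGame N a T := by
      intro T
      simp only [BI, Sym2.lift_mk]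
      rw [Finset.union_sdiff_of_subset hQS]
    simp only [hBI]
    have hQne : Q.Nonempty := Finset.nonempty_iff_ne_empty.mpr hQ0
    have hSQne : (S \ Q).Nonempty := by
      rw [Finset.sdiff_nonempty]
      exact fun h => hQS' (Finset.Subset.antisymm hQS h)
    by_cases haQ : a ∈ S ∧ a ∉ Q
    · have hkey := key (S \ Q) Q hSQne hQne Finset.sdiff_disjoint
        (Finset.sdiff_union_of_subset hQS)
        (fun _ => Finset.mem_sdiff.mpr ⟨haQ.1, haQ.2⟩)
      rw [show (∑ T ∈ (N \ S).powerset, q T *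
          (apexGame N a (S ∪ T) - apexGame N a (Q ∪ T) - apexGame N a ((S \ Q) ∪ T)
            + apexGame N a T)) = ∑ T ∈ (N \ S).powerset, q T *
          (apexGame N a (S ∪ T) - apexGame N a ((S \ Q) ∪ T) - apexGame N a (Q ∪ T)
            + apexGame N a T) from Finset.sum_congr rfl (fun T _ => by ring)]
      exact hkey
    · push_neg at haQ
      exact key Q (S \ Q) hQne hSQne Finset.disjoint_sdiff
        (Finset.union_sdiff_of_subset hQS) haQ
  simp only [coop, attitude, Finset.mul_sum]
  rw [Finset.sum_comm]
  apply Finset.sum_eq_zero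
  intro π hπ
  have : ∑ T ∈ (N \ S).powerset, q T * (p π * BI (apexGame N a) π T) =
      p π * ∑ T ∈ (N \ S).powerset, q T * BI (apexGame N a) π T := by
    rw [Finset.mul_sum]
    exact Finset.sum_congr rfl fun T _ => by ring
  rw [this, main π hπ, mul_zero]
end

section
/- Let (N,x) be the apex game with apex player a, |N| ≥ 3. Then for every S ⊆ N with |S| ≥ 2, both the Banzhaf coopetition index and the Shapley-Owen coopetition index of S vanish: C^x_Bz(S) = 0 and C^x_SO(S) = 0. -/
open Finset

variable {α : Type*} [DecidableEq α]

section ApexAux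

variable {N S T Q R W : Finset α} {a : α}

lemma BI_mk (v : Finset α → ℝ) (A B T : Finset α) :
    BI v s(A, B) T = v (A ∪ B ∪ T) - v (A ∪ T) - v (B ∪ T) + v T := rfl

lemma apex_one (h : (a ∈ W ∧ (W \ {a}).Nonempty) ∨ W = N \ {a}) :
    apexGame N a W = 1 := if_pos h

lemma apex_zero (h1 : ¬ (a ∈ W ∧ (W \ {a}).Nonempty)) (h2 : W ≠ N \ {a}) :
    apexGame N a W = 0 := if_neg (by tauto)

lemma apex_singleton : apexGame N a {a} = 0 := by
  apply apex_zero
  · simp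
  · intro h
    have : a ∈ N \ ({a} : Finset α) := h ▸ mem_singleton_self a
    simp at this

/-- BI in the apex game when the apex player is outside `S`. -/
lemma BI_apex_notin (hS : S ⊆ N) (haS : a ∉ S)
    (hQR : Q ∪ R = S) (hd : Disjoint Q R) (hQ : Q.Nonempty) (hR : R.Nonempty)
    (hT : T ⊆ N \ S) :
    BI (apexGame N a) s(Q, R) T =
      (if T = (N \ S) \ {a} then (1:ℝ) else 0) - (if T = {a} then 1 else 0) := by
  have hQS : Q ⊆ S := hQR ▸ subset_union_left
  have hRS : R ⊆ S := hQR ▸ subset_union_right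
  have hTS : ∀ x ∈ T, x ∉ S := fun x hx => (mem_sdiff.mp (hT hx)).2
  obtain ⟨b, hb⟩ := hQ
  obtain ⟨c, hc⟩ := hR
  have hba : b ≠ a := fun e => haS (hQS (e ▸ hb))
  have hca : c ≠ a := fun e => haS (hRS (e ▸ hc))
  rw [BI_mk, hQR]
  by_cases haT : a ∈ T
  · have h1 : apexGame N a (S ∪ T) = 1 :=
      apex_one (Or.inl ⟨mem_union_right _ haT, ⟨b, mem_sdiff.mpr ⟨mem_union_left _ (hQS hb), by simpa using hba⟩⟩⟩)
    have h2 : apexGame N a (Q ∪ T) = 1 :=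
      apex_one (Or.inl ⟨mem_union_right _ haT, ⟨b, mem_sdiff.mpr ⟨mem_union_left _ hb, by simpa using hba⟩⟩⟩)
    have h3 : apexGame N a (R ∪ T) = 1 :=
      apex_one (Or.inl ⟨mem_union_right _ haT, ⟨c, mem_sdiff.mpr ⟨mem_union_left _ hc, by simpa using hca⟩⟩⟩)
    have h4 : apexGame N a T = if T = {a} then 0 else 1 := by
      by_cases hTa : T = {a}
      · rw [if_pos hTa, hTa, apex_singleton]
      · rw [if_neg hTa]
        apply apex_one
        refine Or.inl ⟨haT, ?_⟩
        by_contra hne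
        apply hTa
        apply subset_antisymm _ (singleton_subset_iff.mpr haT)
        intro x hx
        rw [mem_singleton]
        by_contra hxa
        exact hne ⟨x, mem_sdiff.mpr ⟨hx, by simpa using hxa⟩⟩
    have hT1 : T ≠ (N \ S) \ {a} := by
      intro e
      have := e ▸ haT
      simp at this
    rw [h1, h2, h3, h4, if_neg hT1]
    split_ifs <;> norm_num
  · have h4 : apexGame N a T = 0 := by
      apply apex_zero (fun h => haT h.1)
      intro e
      have hbT : b ∈ T := e ▸ mem_sdiff.mpr ⟨hS (hQS hb), by simpa using hba⟩
      exact hTS b hbT (hQS hb)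
    have h2 : apexGame N a (Q ∪ T) = 0 := by
      apply apex_zero
      · rintro ⟨h, -⟩
        rcases mem_union.mp h with h' | h'
        · exact haS (hQS h')
        · exact haT h'
      · intro e
        have hcm : c ∈ Q ∪ T := e ▸ mem_sdiff.mpr ⟨hS (hRS hc), by simpa using hca⟩
        rcases mem_union.mp hcm with h' | h'
        · exact (disjoint_right.mp hd hc) h'
        · exact hTS c h' (hRS hc)
    have h3 : apexGame N a (R ∪ T) = 0 := by
      apply apex_zero
      · rintro ⟨h, -⟩
        rcases mem_union.mp h with h' | h'
        · exact haS (hRS h')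
        · exact haT h'
      · intro e
        have hbm : b ∈ R ∪ T := e ▸ mem_sdiff.mpr ⟨hS (hQS hb), by simpa using hba⟩
        rcases mem_union.mp hbm with h' | h'
        · exact (disjoint_left.mp hd hb) h'
        · exact hTS b h' (hQS hb)
    have h1 : apexGame N a (S ∪ T) = if T = (N \ S) \ {a} then (1:ℝ) else 0 := by
      by_cases hTe : T = (N \ S) \ {a}
      · rw [if_pos hTe]
        apply apex_one
        refine Or.inr ?_
        subst hTe
        ext x
        simp only [mem_union, mem_sdiff, mem_singleton]
        constructor
        · rintro (h | ⟨⟨h1', h2'⟩, h3'⟩)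
          · exact ⟨hS h, fun e => haS (e ▸ h)⟩
          · exact ⟨h1', h3'⟩
        · rintro ⟨h1', h2'⟩
          by_cases hx : x ∈ S
          · exact Or.inl hx
          · exact Or.inr ⟨⟨h1', hx⟩, h2'⟩
      · rw [if_neg hTe]
        apply apex_zero
        · rintro ⟨h, -⟩
          rcases mem_union.mp h with h' | h'
          · exact haS h'
          · exact haT h'
        · intro e
          apply hTe
          ext x
          simp only [mem_sdiff, mem_singleton]
          constructor
          · intro hx
            have hx' := hT hx
            exact ⟨⟨(mem_sdiff.mp hx').1, (mem_sdiff.mp hx').2⟩, fun e' => haT (e' ▸ hx)⟩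
          · rintro ⟨⟨h1', h2'⟩, h3'⟩
            have : x ∈ S ∪ T := e ▸ mem_sdiff.mpr ⟨h1', by simpa using h3'⟩
            rcases mem_union.mp this with h' | h'
            · exact absurd h' h2'
            · exact h'
    have hT2 : T ≠ {a} := fun e => haT (e ▸ mem_singleton_self a)
    rw [h1, h2, h3, h4, if_neg hT2]
    ring

/-- BI in the apex game when the apex player is in `S`, in part `Q`. -/
lemma BI_apex_mem (hS : S ⊆ N) (hs : 2 ≤ S.card) (haS : a ∈ S)
    (hQR : Q ∪ R = S) (hd : Disjoint Q R) (hQ : Q.Nonempty) (hR : R.Nonempty) (haQ : a ∈ Q)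
    (hT : T ⊆ N \ S) :
    BI (apexGame N a) s(Q, R) T =
      if Q = {a} then (if T = ∅ then (1:ℝ) else 0) - (if T = N \ S then 1 else 0) else 0 := by
  have hQS : Q ⊆ S := hQR ▸ subset_union_left
  have hRS : R ⊆ S := hQR ▸ subset_union_right
  have hTS : ∀ x ∈ T, x ∉ S := fun x hx => (mem_sdiff.mp (hT hx)).2
  have haT : a ∉ T := fun h => hTS a h haS
  obtain ⟨b, hbS, hba⟩ := Finset.exists_mem_ne (lt_of_lt_of_le one_lt_two hs) a
  have hRQ : R = S \ Q := by
    ext x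
    simp only [mem_sdiff]
    constructor
    · intro hx
      exact ⟨hRS hx, disjoint_right.mp hd hx⟩
    · rintro ⟨h1, h2⟩
      rcases mem_union.mp (hQR ▸ h1 : x ∈ Q ∪ R) with h' | h'
      · exact absurd h' h2
      · exact h'
  have h1 : apexGame N a (S ∪ T) = 1 :=
    apex_one (Or.inl ⟨mem_union_left _ haS,
      ⟨b, mem_sdiff.mpr ⟨mem_union_left _ hbS, by simpa using hba⟩⟩⟩)
  have h4 : apexGame N a T = 0 := by
    apply apex_zero (fun h => haT h.1)
    intro e
    have hbT : b ∈ T := e ▸ mem_sdiff.mpr ⟨hS hbS, by simpa using hba⟩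
    exact hTS b hbT hbS
  have h2 : apexGame N a (Q ∪ T) = if Q = {a} ∧ T = ∅ then 0 else 1 := by
    by_cases h : Q = {a} ∧ T = ∅
    · rw [if_pos h, h.1, h.2, union_empty, apex_singleton]
    · rw [if_neg h]
      apply apex_one
      refine Or.inl ⟨mem_union_left _ haQ, ?_⟩
      by_cases hQa : Q = {a}
      · have hTne : T ≠ ∅ := fun e => h ⟨hQa, e⟩
        obtain ⟨x, hx⟩ := nonempty_iff_ne_empty.mpr hTne
        exact ⟨x, mem_sdiff.mpr ⟨mem_union_right _ hx, by simpa using fun (e : x = a) => haT (e ▸ hx)⟩⟩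
      · have : ∃ x ∈ Q, x ≠ a := by
          by_contra hne
          push_neg at hne
          exact hQa (subset_antisymm (fun x hx => mem_singleton.mpr (hne x hx))
            (singleton_subset_iff.mpr haQ))
        obtain ⟨x, hx, hxa⟩ := this
        exact ⟨x, mem_sdiff.mpr ⟨mem_union_left _ hx, by simpa using hxa⟩⟩
  have haR : a ∉ R := disjoint_left.mp hd haQ
  have h3 : apexGame N a (R ∪ T) = if Q = {a} ∧ T = N \ S then 1 else 0 := by
    by_cases h : Q = {a} ∧ T = N \ S
    · rw [if_pos h]
      apply apex_one
      refine Or.inr ?_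
      rw [hRQ, h.1, h.2]
      ext x
      simp only [mem_union, mem_sdiff, mem_singleton]
      constructor
      · rintro (⟨h1', h2'⟩ | ⟨h1', h2'⟩)
        · exact ⟨hS h1', h2'⟩
        · exact ⟨h1', fun e => h2' (e ▸ haS)⟩
      · rintro ⟨h1', h2'⟩
        by_cases hx : x ∈ S
        · exact Or.inl ⟨hx, h2'⟩
        · exact Or.inr ⟨h1', hx⟩
    · rw [if_neg h]
      apply apex_zero
      · rintro ⟨h', -⟩
        rcases mem_union.mp h' with h'' | h''
        · exact haR h''
        · exact haT h''
      · intro e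
        apply h
        have hQa : Q = {a} := by
          apply subset_antisymm _ (singleton_subset_iff.mpr haQ)
          intro x hx
          rw [mem_singleton]
          by_contra hxa
          have : x ∈ R ∪ T := e ▸ mem_sdiff.mpr ⟨hS (hQS hx), by simpa using hxa⟩
          rcases mem_union.mp this with h' | h'
          · exact (disjoint_left.mp hd hx) h'
          · exact hTS x h' (hQS hx)
        refine ⟨hQa, subset_antisymm hT ?_⟩
        intro x hx
        obtain ⟨hxN, hxS⟩ := mem_sdiff.mp hx
        have : x ∈ R ∪ T := e ▸ mem_sdiff.mpr ⟨hxN, by simpa using fun e' : x = a => hxS (e' ▸ haS)⟩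
        rcases mem_union.mp this with h' | h'
        · exact absurd (hRS h') hxS
        · exact h'
  rw [BI_mk, hQR, h1, h2, h3, h4]
  by_cases hQa : Q = {a} <;> by_cases hTe : T = ∅ <;> by_cases hTn : T = N \ S <;>
    simp_all <;> ring

lemma Pi2_mem {π : Sym2 (Finset α)} :
    π ∈ Pi2 S ↔ ∃ Q, Q ⊆ S ∧ Q ≠ ∅ ∧ Q ≠ S ∧ π = s(Q, S \ Q) := by
  unfold Pi2
  simp only [mem_image, mem_filter, mem_powerset]
  constructor
  · rintro ⟨Q, ⟨h1, h2, h3⟩, h4⟩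
    exact ⟨Q, h1, h2, h3, h4.symm⟩
  · rintro ⟨Q, h1, h2, h3, h4⟩
    exact ⟨Q, ⟨h1, h2, h3⟩, h4.symm⟩

lemma pi0_mem (haS : a ∈ S) (hs : 2 ≤ S.card) : s({a}, S \ {a}) ∈ Pi2 S :=
  Pi2_mem.mpr ⟨{a}, singleton_subset_iff.mpr haS, by simp,
    fun h => by rw [← h] at hs; simp at hs, rfl⟩

lemma sumA (hS : S ⊆ N) (hs : 2 ≤ S.card) (haS : a ∈ S) (hT : T ⊆ N \ S)
    (w : Sym2 (Finset α) → ℝ) :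
    ∑ π ∈ Pi2 S, w π * BI (apexGame N a) π T =
      w s({a}, S \ {a}) *
        ((if T = ∅ then (1:ℝ) else 0) - (if T = N \ S then 1 else 0)) := by
  rw [Finset.sum_eq_single_of_mem _ (pi0_mem haS hs)]
  · congr 1
    rw [BI_apex_mem hS hs haS (union_sdiff_of_subset (singleton_subset_iff.mpr haS))
      disjoint_sdiff (singleton_nonempty a)
      (sdiff_nonempty.mpr (fun h => by
        have := card_le_card h
        simp at this; omega))
      (mem_singleton_self a) hT, if_pos rfl]
  · intro π hπ hne
    obtain ⟨Q, hQS, hQne, hQSne, rfl⟩ := Pi2_mem.mp hπ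
    have hu : Q ∪ (S \ Q) = S := union_sdiff_of_subset hQS
    have hQn : Q.Nonempty := nonempty_iff_ne_empty.mpr hQne
    have hRn : (S \ Q).Nonempty := sdiff_nonempty.mpr (fun h => hQSne (subset_antisymm hQS h))
    by_cases haQ : a ∈ Q
    · rw [BI_apex_mem hS hs haS hu disjoint_sdiff hQn hRn haQ hT, if_neg, mul_zero]
      intro h
      exact hne (by rw [h])
    · have haR : a ∈ S \ Q := mem_sdiff.mpr ⟨haS, haQ⟩
      rw [Sym2.eq_swap (a := Q),
        BI_apex_mem hS hs haS (by rw [union_comm]; exact hu) disjoint_sdiff.symm hRn hQn haR hT,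
        if_neg, mul_zero]
      intro h
      apply hne
      have hQ' : Q = S \ {a} := by
        rw [← h, sdiff_sdiff_right_self, inf_eq_inter, inter_eq_right.mpr hQS]
      rw [h, hQ', Sym2.eq_swap]

lemma sumB (hS : S ⊆ N) (haS : a ∉ S) (hT : T ⊆ N \ S)
    (w : Sym2 (Finset α) → ℝ) :
    ∑ π ∈ Pi2 S, w π * BI (apexGame N a) π T =
      (∑ π ∈ Pi2 S, w π) *
        ((if T = (N \ S) \ {a} then (1:ℝ) else 0) - (if T = {a} then 1 else 0)) := by
  rw [Finset.sum_mul]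
  refine Finset.sum_congr rfl fun π hπ => ?_
  obtain ⟨Q, hQS, hQne, hQSne, rfl⟩ := Pi2_mem.mp hπ
  rw [BI_apex_notin hS haS (union_sdiff_of_subset hQS) disjoint_sdiff
    (nonempty_iff_ne_empty.mpr hQne)
    (sdiff_nonempty.mpr (fun h => hQSne (subset_antisymm hQS h))) hT]

lemma outer_sum (P : Finset (Finset α)) (q : Finset α → ℝ) (t₁ t₂ : Finset α)
    (h₁ : t₁ ∈ P) (h₂ : t₂ ∈ P) (hq : q t₁ = q t₂) :
    ∑ T ∈ P, q T * ((if T = t₁ then (1:ℝ) else 0) - (if T = t₂ then 1 else 0)) = 0 := by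
  simp only [mul_sub, mul_ite, mul_one, mul_zero, Finset.sum_sub_distrib]
  rw [Finset.sum_ite_eq' P t₁ q, Finset.sum_ite_eq' P t₂ q, if_pos h₁, if_pos h₂, hq, sub_self]

lemma soExt_empty_full (hS : S ⊆ N) : soExt N S ∅ = soExt N S (N \ S) := by
  unfold soExt
  rw [card_empty, card_sdiff_of_subset hS, Nat.sub_zero, Nat.sub_self]
  simp [Nat.factorial_zero]

lemma soExt_singleton (hS : S ⊆ N) (haNS : a ∈ N \ S) :
    soExt N S ((N \ S) \ {a}) = soExt N S {a} := by
  unfold soExt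
  have h1 : ((N \ S) \ {a}).card = N.card - S.card - 1 := by
    rw [card_sdiff_of_subset (singleton_subset_iff.mpr haNS), card_singleton, card_sdiff_of_subset hS]
  have hm : 1 ≤ N.card - S.card := by
    rw [← card_sdiff_of_subset hS]
    exact card_pos.mpr ⟨a, haNS⟩
  rw [h1, card_singleton, show N.card - S.card - (N.card - S.card - 1) = 1 from by omega,
    show N.card - S.card - 1 = N.card - S.card - 1 from rfl]
  ring

end ApexAux

/-- in the apex game both the Banzhaf and the Shapley-Owen coopetition
indices vanish for every coalition `S` with `|S| ≥ 2`. -/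
theorem statement15 (N : Finset α) (a : α) (ha : a ∈ N) (hn : 3 ≤ N.card)
    (S : Finset α) (hS : S ⊆ N) (hs : 2 ≤ S.card) :
    C_Bz N (apexGame N a) S = 0 ∧ C_SO N (apexGame N a) S = 0 := by
  constructor
  · unfold C_Bz
    rw [mul_eq_zero]
    right
    by_cases haS : a ∈ S
    · calc ∑ T ∈ (N \ S).powerset, ∑ π ∈ Pi2 S, BI (apexGame N a) π T
          = ∑ T ∈ (N \ S).powerset, (1:ℝ) *
            ((if T = ∅ then (1:ℝ) else 0) - (if T = N \ S then 1 else 0)) := by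
            refine Finset.sum_congr rfl fun T hT => ?_
            have := sumA hS hs haS (mem_powerset.mp hT) (fun _ => (1:ℝ))
            simpa using this
        _ = 0 := outer_sum _ _ _ _ (empty_mem_powerset _) (mem_powerset_self _) rfl
    · have haNS : a ∈ N \ S := mem_sdiff.mpr ⟨ha, haS⟩
      calc ∑ T ∈ (N \ S).powerset, ∑ π ∈ Pi2 S, BI (apexGame N a) π T
          = ∑ T ∈ (N \ S).powerset, ((Pi2 S).card : ℝ) *
            ((if T = (N \ S) \ {a} then (1:ℝ) else 0) - (if T = {a} then 1 else 0)) := by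
            refine Finset.sum_congr rfl fun T hT => ?_
            have := sumB hS haS (mem_powerset.mp hT) (fun _ => (1:ℝ))
            simpa using this
        _ = 0 := outer_sum _ _ _ _ (mem_powerset.mpr sdiff_subset)
            (mem_powerset.mpr (singleton_subset_iff.mpr haNS)) rfl
  · unfold C_SO
    by_cases haS : a ∈ S
    · calc ∑ T ∈ (N \ S).powerset, soExt N S T * ∑ π ∈ Pi2 S, soWeight S π * BI (apexGame N a) π T
          = ∑ T ∈ (N \ S).powerset, (soWeight S s({a}, S \ {a}) * soExt N S T) *
            ((if T = ∅ then (1:ℝ) else 0) - (if T = N \ S then 1 else 0)) := by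
            refine Finset.sum_congr rfl fun T hT => ?_
            rw [sumA hS hs haS (mem_powerset.mp hT) (soWeight S)]
            ring
        _ = 0 := outer_sum _ _ _ _ (empty_mem_powerset _) (mem_powerset_self _)
            (by rw [soExt_empty_full hS])
    · have haNS : a ∈ N \ S := mem_sdiff.mpr ⟨ha, haS⟩
      calc ∑ T ∈ (N \ S).powerset, soExt N S T * ∑ π ∈ Pi2 S, soWeight S π * BI (apexGame N a) π T
          = ∑ T ∈ (N \ S).powerset, ((∑ π ∈ Pi2 S, soWeight S π) * soExt N S T) *
            ((if T = (N \ S) \ {a} then (1:ℝ) else 0) - (if T = {a} then 1 else 0)) := by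
            refine Finset.sum_congr rfl fun T hT => ?_
            rw [sumB hS haS (mem_powerset.mp hT) (soWeight S)]
            ring
        _ = 0 := outer_sum _ _ _ _ (mem_powerset.mpr sdiff_subset)
            (mem_powerset.mpr (singleton_subset_iff.mpr haNS))
            (by rw [soExt_singleton hS haNS])
end
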